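/- arXiv:2412.01184 — 2 statements merged into one kernel-verified Lean document; each statement's English description precedes it below -/
import Mathlib

section
/- Let d₁ ≥ 2 be an integer, d₂ ∈ {2, 9}, 0 < t* ≤ 1.5, and let L = L_{d₁d₂}. Suppose F : [0, t*] → ℝ⁵ is continuously differentiable and μ : [0, t*] → ℝ⁵ is continuous with μ(0) = 0, differentiable on (0, t*], and satisfies μ'(t) = (1/t)·L·μ(t) + F(t) for all t ∈ (0, t*]. Then μ is twice differentiable on (0, t*] and sup_{[0,t*]} |μ| + sup_{(0,t*]} |μ'| + sup_{(0,t*]} |μ''| ≤ 600 · (sup_{[0,t*]} |F| + sup_{[0,t*]} |F'|). -/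
/-!
`L` is dissipative, `⟪x, L x⟫ ≤ 0`, and `‖L‖ ≤ 10`. If `ψ' = t⁻¹ L ψ + G` and `ψ 0 = 0`,
dissipativity gives `d‖ψ‖/dt ≤ ‖G‖`; for `μ` this yields `‖μ t‖ ≤ t sup‖F‖`, and then
`‖μ'‖ ≤ 11 sup‖F‖` from the equation. For the second derivative pick `c` with `c - L c = F 0`
(`I - L` is injective by dissipativity, hence onto) and observe that `ψ t = t (μ' t - c)` solves
the same singular equation with forcing `F t - F 0 + t F' t = O(t)`. Hence `‖ψ t‖ ≤ t² sup‖F'‖`,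
and `t μ'' = (L - I) μ' + F + t F'` gives `‖μ''‖ ≤ 13 sup‖F'‖`.
-/

noncomputable section

/-- The 5×5 matrix `L_{d₁d₂}`: zero except `(L)₂₂ = −d₂`, `(L)₃₂ = 2`, `(L)₃₃ = −2`
(rows and columns indexed 1,…,5; here indexed `0,…,4`). -/
def Lmat (d₁ d₂ : ℕ) : Matrix (Fin 5) (Fin 5) ℝ :=
  Matrix.of fun i j =>
    if i = 1 ∧ j = 1 then -(d₂ : ℝ)
    else if i = 2 ∧ j = 1 then 2
    else if i = 2 ∧ j = 2 then -2
    else 0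

/-- The action of `L_{d₁d₂}` on `ℝ⁵` (with the Euclidean norm). -/
def Lop (d₁ d₂ : ℕ) (x : EuclideanSpace ℝ (Fin 5)) : EuclideanSpace ℝ (Fin 5) :=
  WithLp.toLp 2 ((Lmat d₁ d₂).mulVec x)

open Set Topology
open scoped RealInnerProductSpace

theorem norm_le_iSup_norm_of_continuousOn {E α : Type*} [SeminormedAddCommGroup E]
    [TopologicalSpace α] {s : Set α} (hs : IsCompact s) {f : α → E} (hf : ContinuousOn f s)
    {x : α} (hx : x ∈ s) : ‖f x‖ ≤ ⨆ u : s, ‖f u‖ :=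
  le_ciSup (f := fun u : s => ‖f u‖)
    (by simpa only [image_eq_range] using hs.bddAbove_image hf.norm) ⟨x, hx⟩

theorem Lop_apply (d₁ d₂ : ℕ) (x : EuclideanSpace ℝ (Fin 5)) :
    Lop d₁ d₂ x = !₂[0, -d₂ * x 1, 2 * x 1 - 2 * x 2, 0, 0] := by
  ext i
  fin_cases i <;> simp [Lop, Lmat, Matrix.mulVec, dotProduct, Fin.sum_univ_five]; ring

theorem inner_Lop_self_nonpos (d₁ : ℕ) {d₂ : ℕ} (hd₂ : 2 ≤ d₂) (x : EuclideanSpace ℝ (Fin 5)) :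
    ⟪x, Lop d₁ d₂ x⟫ ≤ 0 := by
  have hd : (2 : ℝ) ≤ d₂ := by exact_mod_cast hd₂
  simp only [Lop_apply, PiLp.inner_apply, RCLike.inner_apply, Real.ringHom_apply,
    Fin.sum_univ_five, Matrix.cons_val_zero, Matrix.cons_val_one, Matrix.cons_val, Fin.isValue]
  nlinarith [sq_nonneg (x 1 - x 2), sq_nonneg (x 2), mul_nonneg (sub_nonneg.2 hd) (sq_nonneg (x 1))]

theorem norm_Lop_le (d₁ : ℕ) {d₂ : ℕ} (hd₂ : d₂ ≤ 9) (x : EuclideanSpace ℝ (Fin 5)) :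
    ‖Lop d₁ d₂ x‖ ≤ 10 * ‖x‖ := by
  have hd : (d₂ : ℝ) ≤ 9 := by exact_mod_cast hd₂
  rw [← sq_le_sq₀ (norm_nonneg _) (by positivity), mul_pow, EuclideanSpace.norm_sq_eq,
    EuclideanSpace.norm_sq_eq, Lop_apply]
  simp only [Real.norm_eq_abs, sq_abs, Fin.sum_univ_five, Matrix.cons_val_zero,
    Matrix.cons_val_one, Matrix.cons_val, Fin.isValue]
  nlinarith [sq_nonneg (x 0), sq_nonneg (x 1), sq_nonneg (x 2), sq_nonneg (x 3), sq_nonneg (x 4),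
    sq_nonneg (x 1 + x 2), mul_nonneg (sub_nonneg.2 hd) (sq_nonneg (x 1)),
    mul_nonneg (Nat.cast_nonneg d₂ : (0 : ℝ) ≤ d₂) (sq_nonneg (x 1))]

section InnerProductSpace

variable {E : Type*} [NormedAddCommGroup E] [InnerProductSpace ℝ E]

theorem norm_le_norm_add_sub_of_inner_deriv_le {ψ ψ' : ℝ → E} {B B' : ℝ → ℝ} {a b : ℝ}
    (hab : a ≤ b) (hψc : ContinuousOn ψ (Icc a b)) (hψ : ∀ t ∈ Ioo a b, HasDerivAt ψ (ψ' t) t)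
    (hBc : ContinuousOn B (Icc a b)) (hB : ∀ t ∈ Ioo a b, HasDerivAt B (B' t) t)
    (hB'₀ : ∀ t ∈ Ioo a b, 0 ≤ B' t) (hinner : ∀ t ∈ Ioo a b, ⟪ψ t, ψ' t⟫ ≤ ‖ψ t‖ * B' t) :
    ‖ψ b‖ ≤ ‖ψ a‖ + (B b - B a) := by
  refine le_of_forall_pos_le_add fun ε hε => ?_
  -- `√(‖ψ‖² + ε²)` is a differentiable substitute for `‖ψ‖`
  set ρ : ℝ → ℝ := fun t => √(‖ψ t‖ ^ 2 + ε ^ 2)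
  have hpos : ∀ t, 0 < ‖ψ t‖ ^ 2 + ε ^ 2 := fun t => by positivity
  have hle_ρ : ∀ t, ‖ψ t‖ ≤ ρ t := fun t => Real.le_sqrt_of_sq_le (by nlinarith)
  have hanti : AntitoneOn (fun t => ρ t - B t) (Icc a b) := by
    refine antitoneOn_of_hasDerivWithinAt_nonpos (convex_Icc a b)
      (((hψc.norm.pow 2).add continuousOn_const).sqrt.sub hBc)
      (f' := fun t => 2 * ⟪ψ t, ψ' t⟫ / (2 * ρ t) - B' t) (fun t ht => ?_) (fun t ht => ?_)
    all_goals rw [interior_Icc] at ht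
    · exact ((((hψ t ht).norm_sq.add_const _).sqrt (hpos t).ne').sub (hB t ht)).hasDerivWithinAt
    · have hρ : 0 < ρ t := Real.sqrt_pos.2 (hpos t)
      have : ⟪ψ t, ψ' t⟫ ≤ ρ t * B' t :=
        (hinner t ht).trans (mul_le_mul_of_nonneg_right (hle_ρ t) (hB'₀ t ht))
      rw [sub_nonpos, div_le_iff₀ (by positivity)]
      linarith
  have hρa : ρ a ≤ ‖ψ a‖ + ε := Real.sqrt_le_iff.2 ⟨by positivity, by nlinarith [norm_nonneg (ψ a)]⟩
  have := hanti (left_mem_Icc.2 hab) (right_mem_Icc.2 hab) hab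
  linarith [hle_ρ b]

theorem norm_le_of_singular_ode {A : E →L[ℝ] E} (hA : ∀ x, ⟪x, A x⟫ ≤ 0) {ψ ψ' G : ℝ → E}
    {B B' : ℝ → ℝ} {b : ℝ} (hb : 0 ≤ b) (hψc : ContinuousOn ψ (Icc 0 b)) (hψ₀ : ψ 0 = 0)
    (hψ : ∀ t ∈ Ioo 0 b, HasDerivAt ψ (ψ' t) t)
    (hode : ∀ t ∈ Ioo 0 b, ψ' t = t⁻¹ • A (ψ t) + G t)
    (hBc : ContinuousOn B (Icc 0 b)) (hB₀ : B 0 = 0) (hB : ∀ t ∈ Ioo 0 b, HasDerivAt B (B' t) t)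
    (hG : ∀ t ∈ Ioo 0 b, ‖G t‖ ≤ B' t) : ‖ψ b‖ ≤ B b := by
  have hinner : ∀ t ∈ Ioo 0 b, ⟪ψ t, ψ' t⟫ ≤ ‖ψ t‖ * B' t := fun t ht => by
    rw [hode t ht, inner_add_right, real_inner_smul_right]
    have := mul_nonpos_of_nonneg_of_nonpos (inv_nonneg.2 ht.1.le) (hA (ψ t))
    nlinarith [real_inner_le_norm (ψ t) (G t), hG t ht, norm_nonneg (ψ t)]
  simpa [hψ₀, hB₀] using norm_le_norm_add_sub_of_inner_deriv_le hb hψc hψ hBc hB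
    (fun t ht => (norm_nonneg _).trans (hG t ht)) hinner

theorem exists_sub_apply_eq_of_inner_apply_nonpos [FiniteDimensional ℝ E] {A : E →L[ℝ] E}
    (hA : ∀ x, ⟪x, A x⟫ ≤ 0) (y : E) : ∃ c, c - A c = y := by
  have hinj : Function.Injective (LinearMap.id (R := ℝ) (M := E) - (A : E →ₗ[ℝ] E)) := by
    rw [← LinearMap.ker_eq_bot, LinearMap.ker_eq_bot']
    intro x hx
    have : ⟪x, x - A x⟫ = 0 := by simpa using congrArg (⟪x, ·⟫) hx
    rw [inner_sub_right, real_inner_self_eq_norm_sq] at this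
    exact norm_eq_zero.1 (pow_eq_zero_iff two_ne_zero |>.1 (by linarith [hA x, sq_nonneg ‖x‖]))
  exact LinearMap.injective_iff_surjective.1 hinj y

section SingularODE

variable {A : E →L[ℝ] E} {μ μ' F F' : ℝ → E} {T M M' : ℝ}

theorem singular_ode_norm_le (hA : ∀ x, ⟪x, A x⟫ ≤ 0) (hμc : ContinuousOn μ (Icc 0 T))
    (hμ₀ : μ 0 = 0) (hμ : ∀ t ∈ Ioc 0 T, HasDerivWithinAt μ (μ' t) (Icc 0 T) t)
    (hode : ∀ t ∈ Ioc 0 T, μ' t = t⁻¹ • A (μ t) + F t) (hFM : ∀ t ∈ Icc 0 T, ‖F t‖ ≤ M) :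
    ∀ t ∈ Icc 0 T, ‖μ t‖ ≤ M * t := fun t ht =>
  norm_le_of_singular_ode hA ht.1 (hμc.mono (Icc_subset_Icc_right ht.2)) hμ₀
    (fun s hs => (hμ s ⟨hs.1, hs.2.le.trans ht.2⟩).hasDerivAt
      (Icc_mem_nhds hs.1 (hs.2.trans_le ht.2)))
    (fun s hs => hode s ⟨hs.1, hs.2.le.trans ht.2⟩) (continuous_const_mul M).continuousOn
    (mul_zero M) (fun s _ => by simpa using (hasDerivAt_id s).const_mul M)
    (fun s hs => hFM s ⟨hs.1.le, hs.2.le.trans ht.2⟩)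

theorem singular_ode_deriv_norm_le (hA : ∀ x, ⟪x, A x⟫ ≤ 0) (hμc : ContinuousOn μ (Icc 0 T))
    (hμ₀ : μ 0 = 0) (hμ : ∀ t ∈ Ioc 0 T, HasDerivWithinAt μ (μ' t) (Icc 0 T) t)
    (hode : ∀ t ∈ Ioc 0 T, μ' t = t⁻¹ • A (μ t) + F t) (hFM : ∀ t ∈ Icc 0 T, ‖F t‖ ≤ M) :
    ∀ t ∈ Ioc 0 T, ‖μ' t‖ ≤ (‖A‖ + 1) * M := by
  intro t ht
  have hμt := singular_ode_norm_le hA hμc hμ₀ hμ hode hFM t (Ioc_subset_Icc_self ht)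
  have ht₀ : 0 < t := ht.1
  calc ‖μ' t‖ ≤ t⁻¹ * ‖A (μ t)‖ + ‖F t‖ := by
        rw [hode t ht, ← norm_smul_of_nonneg (inv_nonneg.2 ht₀.le)]
        exact norm_add_le _ _
    _ ≤ t⁻¹ * (‖A‖ * (M * t)) + M := by
        gcongr
        · exact A.le_opNorm_of_le hμt
        · exact hFM t (Ioc_subset_Icc_self ht)
    _ = (‖A‖ + 1) * M := by field_simp

theorem singular_ode_hasDerivWithinAt_deriv
    (hμ : ∀ t ∈ Ioc 0 T, HasDerivWithinAt μ (μ' t) (Icc 0 T) t)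
    (hode : ∀ t ∈ Ioc 0 T, μ' t = t⁻¹ • A (μ t) + F t)
    (hF : ∀ t ∈ Icc 0 T, HasDerivWithinAt F (F' t) (Icc 0 T) t) :
    ∀ t ∈ Ioc 0 T,
      HasDerivWithinAt μ' (t⁻¹ • (A (μ' t) - μ' t + F t) + F' t) (Ioc 0 T) t := by
  intro t ht
  have h := (((hasDerivAt_inv ht.1.ne').hasDerivWithinAt).smul
    ((A.hasFDerivAt.comp_hasDerivWithinAt t (hμ t ht)).mono Ioc_subset_Icc_self)).add
    ((hF t (Ioc_subset_Icc_self ht)).mono Ioc_subset_Icc_self)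
  refine (h.congr (fun s hs => hode s hs) (hode t ht)).congr_deriv ?_
  rw [hode t ht]
  simp only [Function.comp_apply, map_add, map_smul]
  module

theorem singular_ode_norm_deriv_sub_le {c : E} (hA : ∀ x, ⟪x, A x⟫ ≤ 0) (hc : c - A c = F 0)
    (hμc : ContinuousOn μ (Icc 0 T)) (hμ₀ : μ 0 = 0)
    (hμ : ∀ t ∈ Ioc 0 T, HasDerivWithinAt μ (μ' t) (Icc 0 T) t)
    (hode : ∀ t ∈ Ioc 0 T, μ' t = t⁻¹ • A (μ t) + F t)
    (hF : ∀ t ∈ Icc 0 T, HasDerivWithinAt F (F' t) (Icc 0 T) t)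
    (hF'M : ∀ t ∈ Icc 0 T, ‖F' t‖ ≤ M') :
    ∀ r ∈ Ioc 0 T, ‖μ' r - c‖ ≤ M' * r := by
  intro r hr
  have hAc : A c = c - F 0 := by rw [← hc]; abel
  have hsub : ∀ t ∈ Ioo 0 r, t ∈ Ioc 0 T := fun t ht => ⟨ht.1, ht.2.le.trans hr.2⟩
  have hIcc : Icc 0 r ⊆ Icc 0 T := Icc_subset_Icc_right hr.2
  have hF_sub : ∀ t ∈ Icc 0 T, ‖F t - F 0‖ ≤ M' * t := by
    simpa using norm_image_sub_le_of_norm_deriv_le_segment' hF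
      (fun t ht => hF'M t (Ico_subset_Icc_self ht))
  set ψ : ℝ → E := fun t => A (μ t) + t • (F t - c)
  have hψ : ‖ψ r‖ ≤ M' * r ^ 2 := by
    refine norm_le_of_singular_ode hA hr.1.le (ψ' := fun t => A (μ' t) + (F t - c) + t • F' t)
      (G := fun t => F t - F 0 + t • F' t) (B' := fun t => 2 * M' * t) ?_ (by simp [ψ, hμ₀])
      (fun t ht => ?_) (fun t ht => ?_) (continuous_const.mul (continuous_pow 2)).continuousOn
      (by simp) (fun t _ => ?_) (fun t ht => ?_)
    · have hFc : ContinuousOn F (Icc 0 r) := fun t ht =>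
        (hF t (hIcc ht)).continuousWithinAt.mono hIcc
      exact (A.continuous.comp_continuousOn (hμc.mono hIcc)).add
        (continuousOn_id.smul (hFc.sub continuousOn_const))
    · have hnhds : Icc 0 T ∈ 𝓝 t := Icc_mem_nhds ht.1 (ht.2.trans_le hr.2)
      have hμt := (hμ t (hsub t ht)).hasDerivAt hnhds
      have hFt := (hF t (Ioc_subset_Icc_self (hsub t ht))).hasDerivAt hnhds
      exact ((A.hasFDerivAt.comp_hasDerivAt t hμt).add
        ((hasDerivAt_id t).smul (hFt.sub_const c))).congr_deriv (by rw [id, one_smul]; abel)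
    · simp only [ψ, hode t (hsub t ht), map_add, map_smul, map_sub, hAc, smul_add,
        inv_smul_smul₀ ht.1.ne']
      abel
    · exact ((hasDerivAt_pow 2 t).const_mul M').congr_deriv (by push_cast; ring)
    · have ht' : t ∈ Icc 0 T := Ioc_subset_Icc_self (hsub t ht)
      calc ‖F t - F 0 + t • F' t‖ ≤ M' * t + t * M' := by
            refine (norm_add_le _ _).trans (add_le_add (hF_sub t ht') ?_)
            rw [norm_smul_of_nonneg ht.1.le]
            exact mul_le_mul_of_nonneg_left (hF'M t ht') ht.1.le
        _ = 2 * M' * t := by ring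
  have hψr : ψ r = r • (μ' r - c) := by
    simp only [ψ, hode r hr, smul_sub, smul_add, smul_inv_smul₀ hr.1.ne']
    abel
  rw [hψr, norm_smul_of_nonneg hr.1.le, sq] at hψ
  nlinarith [hr.1]

theorem singular_ode_second_deriv_norm_le [FiniteDimensional ℝ E] (hA : ∀ x, ⟪x, A x⟫ ≤ 0)
    (hμc : ContinuousOn μ (Icc 0 T)) (hμ₀ : μ 0 = 0)
    (hμ : ∀ t ∈ Ioc 0 T, HasDerivWithinAt μ (μ' t) (Icc 0 T) t)
    (hode : ∀ t ∈ Ioc 0 T, μ' t = t⁻¹ • A (μ t) + F t)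
    (hF : ∀ t ∈ Icc 0 T, HasDerivWithinAt F (F' t) (Icc 0 T) t)
    (hF'M : ∀ t ∈ Icc 0 T, ‖F' t‖ ≤ M') :
    ∀ r ∈ Ioc 0 T, ‖r⁻¹ • (A (μ' r) - μ' r + F r) + F' r‖ ≤ (‖A‖ + 3) * M' := by
  intro r hr
  have hr₀ : 0 < r := hr.1
  have hr' : r ∈ Icc 0 T := Ioc_subset_Icc_self hr
  obtain ⟨c, hc⟩ := exists_sub_apply_eq_of_inner_apply_nonpos hA (F 0)
  have hμ'c := singular_ode_norm_deriv_sub_le hA hc hμc hμ₀ hμ hode hF hF'M r hr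
  have hF_sub : ‖F r - F 0‖ ≤ M' * r := by
    simpa using norm_image_sub_le_of_norm_deriv_le_segment' hF
      (fun t ht => hF'M t (Ico_subset_Icc_self ht)) r hr'
  have hkey : A (μ' r) - μ' r + F r = (A (μ' r - c) - (μ' r - c)) + (F r - F 0) := by
    rw [map_sub, ← hc]
    abel
  have hAμ' : ‖A (μ' r - c) - (μ' r - c)‖ ≤ ‖A‖ * ‖μ' r - c‖ + ‖μ' r - c‖ :=
    (norm_sub_le _ _).trans (add_le_add_left (A.le_opNorm _) _)
  calc ‖r⁻¹ • (A (μ' r) - μ' r + F r) + F' r‖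
      ≤ r⁻¹ * ((‖A‖ * ‖μ' r - c‖ + ‖μ' r - c‖) + ‖F r - F 0‖) + ‖F' r‖ := by
        rw [hkey]
        refine (norm_add_le _ _).trans (add_le_add_left ?_ _)
        rw [norm_smul_of_nonneg (inv_nonneg.2 hr₀.le)]
        gcongr
        exact (norm_add_le _ _).trans (add_le_add_left hAμ' _)
    _ ≤ r⁻¹ * ((‖A‖ * (M' * r) + M' * r) + M' * r) + M' := by
        gcongr
        exact hF'M r hr'
    _ = (‖A‖ + 3) * M' := by field_simp; ring

end SingularODE

end InnerProductSpace

theorem singular_linear_C1_C2_bound_general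
    (d₁ d₂ : ℕ) (hd₂ : d₂ = 2 ∨ d₂ = 9)
    (tstar : ℝ) (h1 : tstar ≤ 1.5)
    (F F' μ μ' : ℝ → EuclideanSpace ℝ (Fin 5))
    (hFderiv : ∀ t ∈ Set.Icc 0 tstar, HasDerivWithinAt F (F' t) (Set.Icc 0 tstar) t)
    (hF'c : ContinuousOn F' (Set.Icc 0 tstar))
    (hμc : ContinuousOn μ (Set.Icc 0 tstar)) (hμ0 : μ 0 = 0)
    (hderiv : ∀ t ∈ Set.Ioc 0 tstar, HasDerivWithinAt μ (μ' t) (Set.Icc 0 tstar) t)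
    (hode : ∀ t ∈ Set.Ioc 0 tstar, μ' t = (1/t) • Lop d₁ d₂ (μ t) + F t) :
    ∃ μ'' : ℝ → EuclideanSpace ℝ (Fin 5),
      (∀ t ∈ Set.Ioc 0 tstar, HasDerivWithinAt μ' (μ'' t) (Set.Ioc 0 tstar) t) ∧
      ∀ t ∈ Set.Icc (0:ℝ) tstar, ∀ s ∈ Set.Ioc (0:ℝ) tstar, ∀ r ∈ Set.Ioc (0:ℝ) tstar,
        ‖μ t‖ + ‖μ' s‖ + ‖μ'' r‖
          ≤ 600 * ((⨆ u : Set.Icc (0:ℝ) tstar, ‖F u‖)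
            + ⨆ u : Set.Icc (0:ℝ) tstar, ‖F' u‖) := by
  set A := Matrix.toEuclideanCLM (𝕜 := ℝ) (Lmat d₁ d₂)
  have hA : ∀ x, ⟪x, A x⟫ ≤ 0 := inner_Lop_self_nonpos d₁ (by omega)
  have hA_norm : ‖A‖ ≤ 10 := A.opNorm_le_bound (by norm_num) (norm_Lop_le d₁ (by omega))
  have hode' : ∀ t ∈ Ioc 0 tstar, μ' t = t⁻¹ • A (μ t) + F t := fun t ht => by
    rw [hode t ht, one_div]; rfl
  have hFc : ContinuousOn F (Icc 0 tstar) := fun t ht => (hFderiv t ht).continuousWithinAt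
  have hFM := fun t => norm_le_iSup_norm_of_continuousOn (x := t) isCompact_Icc hFc
  have hF'M := fun t => norm_le_iSup_norm_of_continuousOn (x := t) isCompact_Icc hF'c
  refine ⟨_, singular_ode_hasDerivWithinAt_deriv hderiv hode' hFderiv, fun t ht s hs r hr => ?_⟩
  have hμt := singular_ode_norm_le hA hμc hμ0 hderiv hode' hFM t ht
  have hμ's := singular_ode_deriv_norm_le hA hμc hμ0 hderiv hode' hFM s hs
  have hμ''r := singular_ode_second_deriv_norm_le hA hμc hμ0 hderiv hode' hFderiv hF'M r hr
  have h0 : (0 : ℝ) ∈ Icc 0 tstar := ⟨le_rfl, ht.1.trans ht.2⟩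
  have hM := (norm_nonneg _).trans (hFM 0 h0)
  have hM' := (norm_nonneg _).trans (hF'M 0 h0)
  linarith [mul_le_mul_of_nonneg_left (ht.2.trans h1) hM, mul_le_mul_of_nonneg_right hA_norm hM,
    mul_le_mul_of_nonneg_right hA_norm hM']

/-- `C¹ → C²` bound for the singular linear solution operator: if `F` is continuously
differentiable and `μ'(t) = (1/t) L μ(t) + F(t)` on `(0, t*]` with `μ(0) = 0`, then `μ` is
twice differentiable on `(0, t*]` and
`sup |μ| + sup |μ'| + sup |μ''| ≤ 600 (sup |F| + sup |F'|)`
(the sum of sups is stated in the equivalent pairwise form). -/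
theorem singular_linear_C1_C2_bound
    (d₁ d₂ : ℕ) (hd₁ : 2 ≤ d₁) (hd₂ : d₂ = 2 ∨ d₂ = 9)
    (tstar : ℝ) (h0 : 0 < tstar) (h1 : tstar ≤ 1.5)
    (F F' μ μ' : ℝ → EuclideanSpace ℝ (Fin 5))
    (hFderiv : ∀ t ∈ Set.Icc 0 tstar, HasDerivWithinAt F (F' t) (Set.Icc 0 tstar) t)
    (hF'c : ContinuousOn F' (Set.Icc 0 tstar))
    (hμc : ContinuousOn μ (Set.Icc 0 tstar)) (hμ0 : μ 0 = 0)
    (hderiv : ∀ t ∈ Set.Ioc 0 tstar, HasDerivWithinAt μ (μ' t) (Set.Icc 0 tstar) t)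
    (hode : ∀ t ∈ Set.Ioc 0 tstar, μ' t = (1/t) • Lop d₁ d₂ (μ t) + F t) :
    ∃ μ'' : ℝ → EuclideanSpace ℝ (Fin 5),
      (∀ t ∈ Set.Ioc 0 tstar, HasDerivWithinAt μ' (μ'' t) (Set.Ioc 0 tstar) t) ∧
      ∀ t ∈ Set.Icc (0:ℝ) tstar, ∀ s ∈ Set.Ioc (0:ℝ) tstar, ∀ r ∈ Set.Ioc (0:ℝ) tstar,
        ‖μ t‖ + ‖μ' s‖ + ‖μ'' r‖
          ≤ 600 * ((⨆ u : Set.Icc (0:ℝ) tstar, ‖F u‖)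
            + ⨆ u : Set.Icc (0:ℝ) tstar, ‖F' u‖) :=
  singular_linear_C1_C2_bound_general d₁ d₂ hd₂ tstar h1 F F' μ μ' hFderiv hF'c hμc hμ0 hderiv hode
end
end

section
/- Let d₁ ≥ 2 be an integer and d₂ ∈ {2, 9}, and let L = L_{d₁d₂}. Then for every real τ ≥ 0, the operator norm (with respect to the Euclidean norm on ℝ⁵) of the matrix exponential exp(τ·L) is at most 2. -/
noncomputable section

/-!
`L` is the diagonal matrix `D = diag(0, -d₂, -2, 0, 0)` plus the single off-diagonal entry
`2 E₃₂`. If the two diagonal entries `-d₂` and `-2` agree, `D` commutes with `E₃₂`, whose square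
vanishes, so `exp(τL) = exp(τD)(1 + 2τE₃₂)`. If they differ, conjugating `D` by a transvection
`1 + sE₃₂` produces `L`, and `exp(τL)` is read off from the conjugated `exp(τD)`. Either way
`exp(τL) = exp(τD) + c E₃₂` with `c = 2τe^{-2τ}` or `c = 2(e^{-2τ} - e^{-9τ})/7`, and since
`‖exp(τD)‖ ≤ 1` and `|c| ≤ 1` for `τ ≥ 0`, the triangle inequality gives the bound `2`.
-/

open NormedSpace Matrix
open scoped Matrix.Norms.L2Operator

theorem NormedSpace.exp_eq_one_add_of_sq_eq_zero {𝔸 : Type*} [Ring 𝔸] [Algebra ℚ 𝔸]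
    [TopologicalSpace 𝔸] [IsTopologicalRing 𝔸] {a : 𝔸} (h : a ^ 2 = 0) :
    exp a = 1 + a := by
  have hpow : ∀ k, a ^ (k + 2) = 0 := fun k => by rw [pow_add, h, mul_zero]
  rw [congrFun (exp_eq_tsum ℚ) a, tsum_eq_sum (s := Finset.range 2)]
  · simp [Finset.sum_range_succ]
  · intro k hk
    obtain ⟨k, rfl⟩ := Nat.exists_eq_add_of_le' (not_lt.mp (Finset.mem_range.not.mp hk))
    rw [hpow, smul_zero]

theorem Real.mul_exp_neg_le_one (x : ℝ) : x * Real.exp (-x) ≤ 1 := by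
  have h := mul_le_mul_of_nonneg_right ((lt_add_one x).le.trans (Real.add_one_le_exp x))
    (Real.exp_pos (-x)).le
  rwa [← Real.exp_add, add_neg_cancel, Real.exp_zero] at h

theorem Real.abs_exp_mul_sub_exp_mul_le_one {a b τ : ℝ} (hτ : 0 ≤ τ) (hba : b ≤ a)
    (ha : a ≤ 0) : |Real.exp (τ * a) - Real.exp (τ * b)| ≤ 1 := by
  have hle : Real.exp (τ * b) ≤ Real.exp (τ * a) :=
    Real.exp_le_exp.mpr (mul_le_mul_of_nonneg_left hba hτ)
  rw [abs_of_nonneg (sub_nonneg.mpr hle)]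
  linarith [Real.exp_pos (τ * b), Real.exp_le_one_iff.mpr (mul_nonpos_of_nonneg_of_nonpos hτ ha)]

theorem pi_norm_exp_mul_le_one {n : Type*} [Fintype n] {d : n → ℝ} (hd : ∀ k, d k ≤ 0) {τ : ℝ}
    (hτ : 0 ≤ τ) : ‖fun k => Real.exp (τ * d k)‖ ≤ 1 := by
  refine (pi_norm_le_iff_of_nonneg zero_le_one).mpr fun k => ?_
  rw [Real.norm_of_nonneg (Real.exp_pos _).le, Real.exp_le_one_iff]
  exact mul_nonpos_of_nonneg_of_nonpos hτ (hd k)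

namespace Matrix

variable {n : Type*} [Fintype n] [DecidableEq n] {i j : n}

theorem single_mul_diagonal {R : Type*} [Semiring R] (c : R) (d : n → R) :
    single i j c * diagonal d = single i j (c * d j) := by
  ext a b
  rw [mul_diagonal]
  by_cases h : i = a ∧ j = b
  · obtain ⟨rfl, rfl⟩ := h
    simp
  · simp [h]

theorem diagonal_mul_single {R : Type*} [Semiring R] (c : R) (d : n → R) :
    diagonal d * single i j c = single i j (d i * c) := by
  ext a b
  rw [diagonal_mul]
  by_cases h : i = a ∧ j = b
  · obtain ⟨rfl, rfl⟩ := h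
    simp
  · simp [h]

theorem commute_diagonal_single_of_eq {R : Type*} [CommSemiring R] {d : n → R} (h : d i = d j)
    (c : R) : Commute (diagonal d) (single i j c) := by
  rw [Commute, SemiconjBy, single_mul_diagonal, diagonal_mul_single, h, mul_comm]

theorem transvection_mul_diagonal_mul_transvection_neg {R : Type*} [CommRing R] (hij : i ≠ j)
    (d : n → R) (s : R) :
    transvection i j s * diagonal d * transvection i j (-s) =
      diagonal d + single i j (s * (d j - d i)) := by
  simp only [transvection, Matrix.add_mul, Matrix.mul_add, one_mul, mul_one, single_mul_diagonal,
    diagonal_mul_single, single_mul_single_of_ne _ _ _ _ hij.symm, add_zero, add_assoc,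
    ← single_add]
  congr 2
  ring

theorem exp_single_of_ne {R : Type*} [CommRing R] [Algebra ℚ R] [TopologicalSpace R]
    [IsTopologicalRing R] (hij : i ≠ j) (c : R) : exp (single i j c) = transvection i j c :=
  exp_eq_one_add_of_sq_eq_zero <| by rw [sq, single_mul_single_of_ne _ _ _ _ hij.symm]

theorem exp_diagonal_real (d : n → ℝ) :
    exp (diagonal d) = diagonal (fun k => Real.exp (d k)) := by
  rw [exp_diagonal, Real.exp_eq_exp_ℝ]
  exact congrArg diagonal (funext (Pi.coe_exp d))

theorem exp_smul_diagonal_add_single_of_eq (hij : i ≠ j) {d : n → ℝ} (h : d i = d j)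
    (β τ : ℝ) :
    exp (τ • (diagonal d + single i j β)) =
      diagonal (fun k => Real.exp (τ * d k)) + single i j (τ * β * Real.exp (τ * d i)) := by
  have hsplit : τ • (diagonal d + single i j β) =
      diagonal (fun k => τ * d k) + single i j (τ * β) := by
    rw [smul_add, smul_single, ← diagonal_smul]
    rfl
  have hcomm := commute_diagonal_single_of_eq (d := fun k => τ * d k) (congrArg (τ * ·) h) (τ * β)
  rw [hsplit, exp_add_of_commute _ _ hcomm, exp_diagonal_real, exp_single_of_ne hij, transvection,
    mul_add, mul_one, diagonal_mul_single, mul_comm]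

theorem exp_smul_diagonal_add_single_of_ne (hij : i ≠ j) {d : n → ℝ} (h : d i ≠ d j)
    (β τ : ℝ) :
    exp (τ • (diagonal d + single i j β)) =
      diagonal (fun k => Real.exp (τ * d k)) +
        single i j (β * (Real.exp (τ * d i) - Real.exp (τ * d j)) / (d i - d j)) := by
  have hji : d j - d i ≠ 0 := sub_ne_zero.mpr h.symm
  set s := β / (d j - d i)
  have hinv : (transvection i j s)⁻¹ = transvection i j (-s) := by
    refine inv_eq_right_inv ?_
    rw [transvection_mul_transvection_same _ _ hij, add_neg_cancel, transvection_zero]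
  have hunit : IsUnit (transvection i j s) := by
    rw [isUnit_iff_isUnit_det, det_transvection_of_ne _ _ hij]
    exact isUnit_one
  have hconj : τ • (diagonal d + single i j β) =
      transvection i j s * diagonal (fun k => τ * d k) * (transvection i j s)⁻¹ := by
    rw [hinv, transvection_mul_diagonal_mul_transvection_neg hij, smul_add, smul_single,
      ← diagonal_smul]
    congr 2
    simp only [s, smul_eq_mul]
    field_simp
  rw [hconj, exp_conj _ _ hunit, exp_diagonal_real, hinv,
    transvection_mul_diagonal_mul_transvection_neg hij]
  congr 2
  simp only [s]
  field_simp
  ring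

theorem l2_opNorm_single {𝕜 : Type*} [RCLike 𝕜] (c : 𝕜) : ‖single i j c‖ = ‖c‖ := by
  have h := l2_opNorm_conjTranspose_mul_self (single i j c)
  rw [conjTranspose_single, single_mul_single_same, ← diagonal_single, l2_opNorm_diagonal,
    Pi.norm_single, norm_mul, norm_star] at h
  exact (mul_self_inj (norm_nonneg _) (norm_nonneg _)).mp h.symm

end Matrix

theorem Lmat_eq_diagonal_add_single (d₁ d₂ : ℕ) :
    Lmat d₁ d₂ = diagonal ![0, -(d₂ : ℝ), -2, 0, 0] + single 2 1 2 := by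
  ext a b
  fin_cases a <;> fin_cases b <;> simp [Lmat]

theorem exists_exp_smul_Lmat_eq_diagonal_add_single (d₁ d₂ : ℕ) (hd₂ : d₂ = 2 ∨ d₂ = 9) {τ : ℝ}
    (hτ : 0 ≤ τ) : ∃ c : ℝ, |c| ≤ 1 ∧ exp (τ • Lmat d₁ d₂) =
      diagonal (fun k => Real.exp (τ * ![0, -(d₂ : ℝ), -2, 0, 0] k)) + single 2 1 c := by
  set d : Fin 5 → ℝ := ![0, -(d₂ : ℝ), -2, 0, 0] with hd_def
  have hd_one : d 1 = -d₂ := rfl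
  have hd_two : d 2 = -2 := rfl
  rw [Lmat_eq_diagonal_add_single, ← hd_def]
  rcases hd₂ with rfl | rfl
  · refine ⟨_, ?_, exp_smul_diagonal_add_single_of_eq (by decide) (by simp [hd_one, hd_two]) 2 τ⟩
    calc |τ * 2 * Real.exp (τ * d 2)| = 2 * τ * Real.exp (-(2 * τ)) := by
          rw [hd_two, abs_of_nonneg (by positivity)]
          ring_nf
      _ ≤ 1 := Real.mul_exp_neg_le_one _
  · refine ⟨_, ?_, exp_smul_diagonal_add_single_of_ne (by decide) (by simp [hd_one, hd_two]) 2 τ⟩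
    have h := Real.abs_exp_mul_sub_exp_mul_le_one (a := d 2) (b := d 1) hτ
      (by norm_num [hd_one, hd_two]) (by norm_num [hd_two])
    have hden : d 2 - d 1 = 7 := by norm_num [hd_one, hd_two]
    rw [hden, abs_div, abs_mul, abs_two, abs_of_pos (by norm_num : (0 : ℝ) < 7)]
    linarith

theorem exp_Lmat_norm_le_two_general
    (d₁ d₂ : ℕ) (hd₂ : d₂ = 2 ∨ d₂ = 9)
    (τ : ℝ) (hτ : 0 ≤ τ) :
    ‖Matrix.toEuclideanCLM (𝕜 := ℝ) (NormedSpace.exp (τ • Lmat d₁ d₂))‖ ≤ 2 := by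
  have hd : ∀ k, (![0, -(d₂ : ℝ), -2, 0, 0] : Fin 5 → ℝ) k ≤ 0 := by
    intro k
    fin_cases k <;> simp
  obtain ⟨c, hc, hexp⟩ := exists_exp_smul_Lmat_eq_diagonal_add_single d₁ d₂ hd₂ hτ
  rw [l2_opNorm_toEuclideanCLM, hexp]
  calc _ ≤ _ := norm_add_le _ _
    _ ≤ 1 + 1 := by
      rw [l2_opNorm_diagonal, l2_opNorm_single, Real.norm_eq_abs]
      exact add_le_add (pi_norm_exp_mul_le_one hd hτ) hc
    _ = 2 := by norm_num

/-- For `d₁ ≥ 2`, `d₂ ∈ {2, 9}` and every `τ ≥ 0`, the operator norm (w.r.t. the Euclidean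
norm on `ℝ⁵`) of the matrix exponential `exp(τ L_{d₁d₂})` is at most `2`. -/
theorem exp_Lmat_norm_le_two
    (d₁ d₂ : ℕ) (hd₁ : 2 ≤ d₁) (hd₂ : d₂ = 2 ∨ d₂ = 9)
    (τ : ℝ) (hτ : 0 ≤ τ) :
    ‖Matrix.toEuclideanCLM (𝕜 := ℝ) (NormedSpace.exp (τ • Lmat d₁ d₂))‖ ≤ 2 :=
  exp_Lmat_norm_le_two_general d₁ d₂ hd₂ τ hτ
end
end
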